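/- arXiv:0904.1635 — 8 statements merged into one kernel-verified Lean document; each statement's English description precedes it below -/
import Mathlib

section
/- If S is an LA-semigroup with left identity e, then every right ideal of S is also a left ideal (hence a two-sided ideal). -/
theorem mul_eq_mul_mul_of_left_invertive {S : Type*} [Mul S]
    (hli : ∀ a b c : S, (a * b) * c = (c * b) * a) {e : S} (he : ∀ x : S, e * x = x)
    (s i : S) : s * i = (i * s) * e := by
  rw [hli i s e, he]

/-- In an LA-semigroup with left identity, every right ideal is a left ideal. -/
theorem la_right_ideal_is_left {S : Type*} [Mul S]
    (hli : ∀ a b c : S, (a * b) * c = (c * b) * a)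
    (e : S) (he : ∀ x : S, e * x = x)
    (I : Set S) (hI : ∀ i ∈ I, ∀ s : S, i * s ∈ I) :
    ∀ s : S, ∀ i ∈ I, s * i ∈ I := by
  intro s i hi
  rw [mul_eq_mul_mul_of_left_invertive hli he s i]
  exact hI _ (hI i hi s) e
end

section
/- If I is a left ideal of an LA-semigroup S with left identity e, then for any a in S, the set aI = {ai : i ∈ I} is a left ideal of S. -/
theorem mul_left_comm_of_left_invertive {S : Type*} [Mul S]
    (hli : ∀ a b c : S, a * b * c = c * b * a) {e : S} (he : ∀ x : S, e * x = x)
    (a b c : S) : a * (b * c) = b * (a * c) :=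
  calc a * (b * c) = e * a * (b * c) := by rw [he]
    _ = b * c * a * e := hli _ _ _
    _ = a * c * b * e := by rw [hli b c a]
    _ = e * b * (a * c) := hli _ _ _
    _ = b * (a * c) := by rw [he]

/-- If I is a left ideal of an LA-semigroup with left identity, then aI is a left ideal. -/
theorem la_aI_left_ideal {S : Type*} [Mul S]
    (hli : ∀ a b c : S, (a * b) * c = (c * b) * a)
    (e : S) (he : ∀ x : S, e * x = x)
    (I : Set S) (hI : ∀ s : S, ∀ i ∈ I, s * i ∈ I) (a : S) :
    ∀ s : S, ∀ x ∈ {x : S | ∃ i ∈ I, x = a * i}, s * x ∈ {x : S | ∃ i ∈ I, x = a * i} := by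
  rintro s x ⟨i, hi, rfl⟩
  exact ⟨s * i, hI s i hi, mul_left_comm_of_left_invertive hli he s a i⟩
end

section
/- If I is a right ideal of an LA-semigroup S with left identity e, then I² = {ij : i, j ∈ I} is a two-sided ideal of S. -/
section LeftInvertive

variable {S : Type*} [Mul S] (hli : ∀ a b c : S, (a * b) * c = (c * b) * a)
include hli

theorem mul_mul_mul_comm_of_leftInvertive (a b c d : S) :
    (a * b) * (c * d) = (a * c) * (b * d) := by
  rw [hli a b (c * d), hli c d b, hli (b * d) c a]

/-- `s * x = (e * s) * x = (x * s) * e`, so every right ideal is two-sided. -/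
theorem mul_mem_of_forall_mem_mul_of_leftInvertive {e : S} (he : ∀ x : S, e * x = x)
    {J : Set S} (hJ : ∀ x ∈ J, ∀ s : S, x * s ∈ J) (s : S) {x : S} (hx : x ∈ J) :
    s * x ∈ J := by
  have h : s * x = (x * s) * e := by rw [← hli, he]
  exact h ▸ hJ _ (hJ x hx s) e

theorem mul_mem_sq_of_leftInvertive {e : S} (he : ∀ x : S, e * x = x)
    {I : Set S} (hI : ∀ i ∈ I, ∀ s : S, i * s ∈ I) :
    ∀ x ∈ {x : S | ∃ i ∈ I, ∃ j ∈ I, x = i * j}, ∀ s : S,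
      x * s ∈ {x : S | ∃ i ∈ I, ∃ j ∈ I, x = i * j} := by
  rintro x ⟨i, hi, j, hj, rfl⟩ s
  -- `(i * j) * s = (i * j) * (e * s) = (i * e) * (j * s)` by the medial law
  refine ⟨i * e, hI i hi e, j * s, hI j hj s, ?_⟩
  rw [← mul_mul_mul_comm_of_leftInvertive hli, he]

end LeftInvertive

/-- If I is a right ideal of an LA-semigroup with left identity, then I² is a two-sided ideal. -/
theorem la_right_ideal_sq {S : Type*} [Mul S]
    (hli : ∀ a b c : S, (a * b) * c = (c * b) * a)
    (e : S) (he : ∀ x : S, e * x = x)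
    (I : Set S) (hI : ∀ i ∈ I, ∀ s : S, i * s ∈ I) :
    (∀ x ∈ {x : S | ∃ i ∈ I, ∃ j ∈ I, x = i * j}, ∀ s : S,
        x * s ∈ {x : S | ∃ i ∈ I, ∃ j ∈ I, x = i * j}) ∧
    (∀ s : S, ∀ x ∈ {x : S | ∃ i ∈ I, ∃ j ∈ I, x = i * j},
        s * x ∈ {x : S | ∃ i ∈ I, ∃ j ∈ I, x = i * j}) := by
  have hright := mul_mem_sq_of_leftInvertive hli he hI
  exact ⟨hright, fun s _ hx ↦ mul_mem_of_forall_mem_mul_of_leftInvertive hli he hright s hx⟩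
end

section
/- An LA-semigroup S with left identity e is fully prime if and only if every ideal of S is idempotent (I = I²) and the set of ideals of S is totally ordered under inclusion. -/
/-!
The product `AB` of two ideals is again an ideal, contained in both `A` and `B`; with a left
identity `e` the medial law gives `a(bc) = b(ac)` and `(ab)s = (ae)(bs)`, which is what closes
`AB` under multiplication. So if every ideal is prime, primeness of `I²` forces `I ⊆ I²`, and
primeness of `AB` forces `A ⊆ AB ⊆ B` or `B ⊆ AB ⊆ A`. Conversely, if say `A ⊆ B`, then
`A = A² ⊆ AB`, so `AB ⊆ P` gives `A ⊆ P`.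
-/

def LAIdeal {S : Type*} [Mul S] (I : Set S) : Prop :=
  I.Nonempty ∧ (∀ s : S, ∀ i ∈ I, s * i ∈ I) ∧ (∀ i ∈ I, ∀ s : S, i * s ∈ I)

def LAsetMul {S : Type*} [Mul S] (A B : Set S) : Set S :=
  {x : S | ∃ a ∈ A, ∃ b ∈ B, x = a * b}

section LASemigroup

variable {S : Type*} [Mul S]

def LAPrime (P : Set S) : Prop :=
  ∀ A B : Set S, LAIdeal A → LAIdeal B → LAsetMul A B ⊆ P → A ⊆ P ∨ B ⊆ P

theorem la_medial (hli : ∀ a b c : S, (a * b) * c = (c * b) * a) (a b c d : S) :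
    (a * b) * (c * d) = (a * c) * (b * d) := by
  rw [hli a b (c * d), hli c d b, hli (b * d) c a]

theorem la_left_comm (hli : ∀ a b c : S, (a * b) * c = (c * b) * a) {e : S}
    (he : ∀ x : S, e * x = x) (a b c : S) : a * (b * c) = b * (a * c) := by
  simpa only [he] using la_medial hli e a b c

theorem LAsetMul_mono {A A' B B' : Set S} (hA : A ⊆ A') (hB : B ⊆ B') :
    LAsetMul A B ⊆ LAsetMul A' B' := by
  rintro x ⟨a, ha, b, hb, rfl⟩
  exact ⟨a, hA ha, b, hB hb, rfl⟩

theorem LAIdeal.setMul_subset_left {A : Set S} (hA : LAIdeal A) (B : Set S) :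
    LAsetMul A B ⊆ A := by
  rintro x ⟨a, ha, b, -, rfl⟩
  exact hA.2.2 a ha b

theorem LAIdeal.setMul_subset_right (A : Set S) {B : Set S} (hB : LAIdeal B) :
    LAsetMul A B ⊆ B := by
  rintro x ⟨a, -, b, hb, rfl⟩
  exact hB.2.1 a b hb

theorem LAIdeal.setMul (hli : ∀ a b c : S, (a * b) * c = (c * b) * a) {e : S}
    (he : ∀ x : S, e * x = x) {A B : Set S} (hA : LAIdeal A) (hB : LAIdeal B) :
    LAIdeal (LAsetMul A B) := by
  obtain ⟨⟨a₀, ha₀⟩, -, hA_right⟩ := hA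
  obtain ⟨⟨b₀, hb₀⟩, hB_left, hB_right⟩ := hB
  refine ⟨⟨a₀ * b₀, a₀, ha₀, b₀, hb₀, rfl⟩, ?_, ?_⟩
  · rintro s x ⟨a, ha, b, hb, rfl⟩
    exact ⟨a, ha, s * b, hB_left s b hb, la_left_comm hli he s a b⟩
  · rintro x ⟨a, ha, b, hb, rfl⟩ s
    refine ⟨a * e, hA_right a ha e, b * s, hB_right b hb s, ?_⟩
    rw [← la_medial hli, he]

theorem LAPrime.eq_setMul_self {I : Set S} (hI : LAIdeal I) (hP : LAPrime (LAsetMul I I)) :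
    I = LAsetMul I I :=
  ((hP I I hI hI subset_rfl).elim id id).antisymm (hI.setMul_subset_left I)

theorem LAPrime.subset_total {A B : Set S} (hA : LAIdeal A) (hB : LAIdeal B)
    (hP : LAPrime (LAsetMul A B)) : A ⊆ B ∨ B ⊆ A :=
  (hP A B hA hB subset_rfl).imp (·.trans (LAIdeal.setMul_subset_right A hB))
    (·.trans (hA.setMul_subset_left B))

theorem laPrime_of_idempotent_of_total (hidem : ∀ I : Set S, LAIdeal I → I = LAsetMul I I)
    (htot : ∀ A B : Set S, LAIdeal A → LAIdeal B → A ⊆ B ∨ B ⊆ A) (P : Set S) :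
    LAPrime P := by
  intro A B hA hB hABP
  rcases htot A B hA hB with hAB | hBA
  · left
    calc A = LAsetMul A A := hidem A hA
      _ ⊆ LAsetMul A B := LAsetMul_mono subset_rfl hAB
      _ ⊆ P := hABP
  · right
    calc B = LAsetMul B B := hidem B hB
      _ ⊆ LAsetMul A B := LAsetMul_mono hBA subset_rfl
      _ ⊆ P := hABP

end LASemigroup

/-- An LA-semigroup with left identity is fully prime iff every ideal is
idempotent and the ideals are totally ordered under inclusion. -/
theorem la_fully_prime_iff {S : Type*} [Mul S]
    (hli : ∀ a b c : S, (a * b) * c = (c * b) * a)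
    (e : S) (he : ∀ x : S, e * x = x) :
    (∀ P : Set S, LAIdeal P → ∀ A B : Set S, LAIdeal A → LAIdeal B →
        LAsetMul A B ⊆ P → A ⊆ P ∨ B ⊆ P) ↔
    ((∀ I : Set S, LAIdeal I → I = LAsetMul I I) ∧
      (∀ A B : Set S, LAIdeal A → LAIdeal B → A ⊆ B ∨ B ⊆ A)) := by
  constructor
  · intro hfp
    exact ⟨fun I hI => LAPrime.eq_setMul_self hI (hfp _ (hI.setMul hli he hI)),
      fun A B hA hB => LAPrime.subset_total hA hB (hfp _ (hA.setMul hli he hB))⟩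
  · rintro ⟨hidem, htot⟩ P -
    exact laPrime_of_idempotent_of_total hidem htot P
end

section
/- Let S be an LA-semigroup with left identity e. A left ideal P of S is quasi-semiprime if and only if for all a in S, a(Sa) ⊆ P implies a ∈ P. -/
def LALeftIdeal {S : Type*} [Mul S] (I : Set S) : Prop :=
  I.Nonempty ∧ ∀ s : S, ∀ i ∈ I, s * i ∈ I

/-! For `a ∈ S` the set `Sa` is a left ideal containing `a = ea`, and by the medial law
`(sa)(ta) = a((st)a)`, so `(Sa)² ⊆ a(Sa)`; quasi-semiprimeness applied to `Sa` gives the forward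
direction. Conversely, if `a` lies in a left ideal `I` then `a(Sa) ⊆ I²`. -/

namespace LA

variable {S : Type*} [Mul S] (hli : ∀ a b c : S, (a * b) * c = (c * b) * a)
include hli

theorem mul_mul_mul_comm (x y z w : S) : (x * y) * (z * w) = (x * z) * (y * w) :=
  calc (x * y) * (z * w) = ((z * w) * y) * x := hli x y (z * w)
    _ = ((y * w) * z) * x := by rw [hli z w y]
    _ = (x * z) * (y * w) := hli (y * w) z x

variable {e : S} (he : ∀ x : S, e * x = x)
include he

theorem mul_left_comm (x y z : S) : x * (y * z) = y * (x * z) :=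
  calc x * (y * z) = (e * x) * (y * z) := by rw [he]
    _ = (e * y) * (x * z) := mul_mul_mul_comm hli e x y z
    _ = y * (x * z) := by rw [he]

theorem mul_mul_mul_paramedial (a b c d : S) : (a * b) * (c * d) = (d * b) * (c * a) :=
  calc (a * b) * (c * d) = c * ((a * b) * d) := mul_left_comm hli he _ _ _
    _ = c * ((d * b) * a) := by rw [hli]
    _ = (d * b) * (c * a) := mul_left_comm hli he _ _ _

theorem mul_mul_right_eq_mul_right (s t a : S) : s * (t * a) = ((t * e) * s) * a :=
  calc s * (t * a) = (e * s) * (t * a) := by rw [he]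
    _ = (a * s) * (t * e) := mul_mul_mul_paramedial hli he e s t a
    _ = ((t * e) * s) * a := hli a s (t * e)

theorem leftIdeal_range_mul_right (a : S) : LALeftIdeal (Set.range (· * a)) :=
  ⟨⟨a, e, he a⟩, by
    rintro s _ ⟨t, rfl⟩
    exact ⟨(t * e) * s, (mul_mul_right_eq_mul_right hli he s t a).symm⟩⟩

theorem setMul_range_mul_right_subset (a : S) :
    LAsetMul (Set.range (· * a)) (Set.range (· * a)) ⊆ {x : S | ∃ s : S, x = a * (s * a)} := by
  rintro _ ⟨_, ⟨s, rfl⟩, _, ⟨t, rfl⟩, rfl⟩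
  exact ⟨s * t, by rw [mul_mul_mul_comm hli, mul_left_comm hli he]⟩

end LA

theorem LALeftIdeal.mul_mul_subset_setMul {S : Type*} [Mul S] {I : Set S} (hI : LALeftIdeal I)
    {a : S} (ha : a ∈ I) : {x : S | ∃ s : S, x = a * (s * a)} ⊆ LAsetMul I I := by
  rintro _ ⟨s, rfl⟩
  exact ⟨a, ha, s * a, hI.2 s a ha, rfl⟩

theorem la_quasi_semiprime_iff_general {S : Type*} [Mul S]
    (hli : ∀ a b c : S, (a * b) * c = (c * b) * a)
    (e : S) (he : ∀ x : S, e * x = x)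
    (P : Set S) :
    (∀ I : Set S, LALeftIdeal I → LAsetMul I I ⊆ P → I ⊆ P) ↔
    (∀ a : S, {x : S | ∃ s : S, x = a * (s * a)} ⊆ P → a ∈ P) := by
  constructor
  · intro hsemi a ha
    exact hsemi _ (LA.leftIdeal_range_mul_right hli he a)
      ((LA.setMul_range_mul_right_subset hli he a).trans ha) ⟨e, he a⟩
  · intro h I hI hII a ha
    exact h a ((hI.mul_mul_subset_setMul ha).trans hII)

/-- A left ideal P of an LA-semigroup with left identity is quasi-semiprime
iff a(Sa) ⊆ P implies a ∈ P. -/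
theorem la_quasi_semiprime_iff {S : Type*} [Mul S]
    (hli : ∀ a b c : S, (a * b) * c = (c * b) * a)
    (e : S) (he : ∀ x : S, e * x = x)
    (P : Set S) (hP : LALeftIdeal P) :
    (∀ I : Set S, LALeftIdeal I → LAsetMul I I ⊆ P → I ⊆ P) ↔
    (∀ a : S, {x : S | ∃ s : S, x = a * (s * a)} ⊆ P → a ∈ P) :=
  la_quasi_semiprime_iff_general hli e he P
end

section
/- Every right ideal of a regular LA-semigroup is a two-sided ideal. -/
theorem mul_eq_mul_mul_of_eq_mul_mul {S : Type*} [Mul S]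
    (hli : ∀ a b c : S, (a * b) * c = (c * b) * a) {s x : S} (hs : s = (s * x) * s) (t : S) :
    s * t = (t * s) * (s * x) := by
  conv_lhs => rw [hs]
  exact hli _ _ _

/-- Every right ideal of a regular LA-semigroup is a two-sided ideal. -/
theorem la_regular_right_ideal_two_sided {S : Type*} [Mul S]
    (hli : ∀ a b c : S, (a * b) * c = (c * b) * a)
    (hreg : ∀ a : S, ∃ x : S, a = (a * x) * a)
    (I : Set S) (hI : ∀ i ∈ I, ∀ s : S, i * s ∈ I) :
    ∀ s : S, ∀ i ∈ I, s * i ∈ I := by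
  intro s i hi
  obtain ⟨x, hx⟩ := hreg s
  rw [mul_eq_mul_mul_of_eq_mul_mul hli hx i]
  exact hI _ (hI i hi s) _
end

section
/- If S is a regular LA-semigroup, P a right ideal of S, and Q a left ideal of S, then PQ = P ∩ Q, where PQ = {pq : p ∈ P, q ∈ Q}. -/
theorem la_regular_PQ_eq_inter_general {S : Type*} [Mul S]
    (hreg : ∀ a : S, ∃ x : S, a = (a * x) * a)
    (P Q : Set S)
    (hP : ∀ p ∈ P, ∀ s : S, p * s ∈ P)
    (hQ : ∀ s : S, ∀ q ∈ Q, s * q ∈ Q) :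
    {x : S | ∃ p ∈ P, ∃ q ∈ Q, x = p * q} = P ∩ Q := by
  ext a
  constructor
  · rintro ⟨p, hp, q, hq, rfl⟩
    exact ⟨hP p hp q, hQ p q hq⟩
  · rintro ⟨haP, haQ⟩
    obtain ⟨x, hx⟩ := hreg a
    exact ⟨a * x, hP a haP x, a, haQ, hx⟩

/-- In a regular LA-semigroup, PQ = P ∩ Q for a right ideal P and left ideal Q. -/
theorem la_regular_PQ_eq_inter {S : Type*} [Mul S]
    (hli : ∀ a b c : S, (a * b) * c = (c * b) * a)
    (hreg : ∀ a : S, ∃ x : S, a = (a * x) * a)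
    (P Q : Set S)
    (hP : ∀ p ∈ P, ∀ s : S, p * s ∈ P)
    (hQ : ∀ s : S, ∀ q ∈ Q, s * q ∈ Q) :
    {x : S | ∃ p ∈ P, ∃ q ∈ Q, x = p * q} = P ∩ Q :=
  la_regular_PQ_eq_inter_general hreg P Q hP hQ
end

section
/- Every ideal in a regular LA-semigroup S is prime if and only if every ideal is strongly irreducible. -/
/-! In a regular LA-semigroup the product of two ideals equals their intersection: `AB ⊆ A ∩ B`
holds for any right ideal `A` and left ideal `B`, and conversely `a ∈ A ∩ B` factors as
`a = (a x) a` with `a x ∈ A` and `a ∈ B`. So primeness and strong irreducibility are the same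
condition on each ideal. -/

section

variable {S : Type*} [Mul S] {A B : Set S}

theorem LAsetMul_subset_inter (hA : ∀ i ∈ A, ∀ s : S, i * s ∈ A)
    (hB : ∀ s : S, ∀ i ∈ B, s * i ∈ B) : LAsetMul A B ⊆ A ∩ B := by
  rintro _ ⟨a, ha, b, hb, rfl⟩
  exact ⟨hA a ha b, hB a b hb⟩

theorem inter_subset_LAsetMul_of_regular (hreg : ∀ a : S, ∃ x : S, a = (a * x) * a)
    (hA : ∀ i ∈ A, ∀ s : S, i * s ∈ A) : A ∩ B ⊆ LAsetMul A B := by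
  rintro a ⟨haA, haB⟩
  obtain ⟨x, hx⟩ := hreg a
  exact ⟨a * x, hA a haA x, a, haB, hx⟩

theorem LAsetMul_eq_inter_of_regular (hreg : ∀ a : S, ∃ x : S, a = (a * x) * a)
    (hA : LAIdeal A) (hB : LAIdeal B) : LAsetMul A B = A ∩ B :=
  (LAsetMul_subset_inter hA.2.2 hB.2.1).antisymm (inter_subset_LAsetMul_of_regular hreg hA.2.2)

end

theorem la_regular_fully_prime_iff_strongly_irreducible_general {S : Type*} [Mul S]
    (hreg : ∀ a : S, ∃ x : S, a = (a * x) * a) :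
    (∀ P : Set S, LAIdeal P → ∀ A B : Set S, LAIdeal A → LAIdeal B →
        LAsetMul A B ⊆ P → A ⊆ P ∨ B ⊆ P) ↔
    (∀ P : Set S, LAIdeal P → ∀ A B : Set S, LAIdeal A → LAIdeal B →
        A ∩ B ⊆ P → A ⊆ P ∨ B ⊆ P) := by
  constructor
  · intro hprime P hP A B hA hB hsub
    exact hprime P hP A B hA hB (LAsetMul_eq_inter_of_regular hreg hA hB ▸ hsub)
  · intro hirred P hP A B hA hB hsub
    exact hirred P hP A B hA hB (LAsetMul_eq_inter_of_regular hreg hA hB ▸ hsub)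

/-- In a regular LA-semigroup, every ideal is prime iff every ideal is
strongly irreducible. -/
theorem la_regular_fully_prime_iff_strongly_irreducible {S : Type*} [Mul S]
    (hli : ∀ a b c : S, (a * b) * c = (c * b) * a)
    (hreg : ∀ a : S, ∃ x : S, a = (a * x) * a) :
    (∀ P : Set S, LAIdeal P → ∀ A B : Set S, LAIdeal A → LAIdeal B →
        LAsetMul A B ⊆ P → A ⊆ P ∨ B ⊆ P) ↔
    (∀ P : Set S, LAIdeal P → ∀ A B : Set S, LAIdeal A → LAIdeal B →
        A ∩ B ⊆ P → A ⊆ P ∨ B ⊆ P) :=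
  la_regular_fully_prime_iff_strongly_irreducible_general hreg
end
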